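/- Let n, m be coprime positive integers, α ∈ ℂ^m, β ∈ ℂ^n. Then the mn-tuple of products (α_k β_ℓ)_{1≤k≤m, 1≤ℓ≤n} satisfies D((α_k β_ℓ)) ≤ (1 + D(α))(1 + D(β)) − 1. -/

import Mathlib

/-!
The infima defining `D(α)` and `D(β)` are attained at rotations `u`, `v` since the unit circle
is compact. Since `m` and `n` are coprime, `ζ_m ζ_n` is a primitive `mn`-th root of unity, so every
`ζ_{mn}^j` factors as `ζ_m^a ζ_n^b`, and the target point `uv ζ_{mn}^j` is the product of the
targets `u ζ_m^a` and `v ζ_n^b`. If `α_k` and `β_ℓ` are the entries closest to these two targets,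
then `|ab - pq| ≤ (1 + |a - p|)(1 + |b - q|) - 1` for `|p|, |q| ≤ 1` bounds the distance from
`α_k β_ℓ` to `uv ζ_{mn}^j`.
-/

/-- `ζ_d = exp(2πi/d)`. -/
noncomputable def zetad (d : ℕ) : ℂ := Complex.exp (2 * Real.pi * Complex.I / d)

/-- The finite discrepancy `D(ξ) = inf_{|u|=1} max_j min_i |ξ_i − u ζ_d^j|`. -/
noncomputable def Disc {d : ℕ} (ξ : Fin d → ℂ) : ℝ :=
  sInf {t : ℝ | ∃ u : ℂ, ‖u‖ = 1 ∧
    t = ⨆ j : Fin d, ⨅ i : Fin d, ‖ξ i - u * zetad d ^ ((j : ℕ) + 1)‖}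

open Metric

section FiniteLattice

variable {ι X L : Type*} [Fintype ι] [TopologicalSpace X] [TopologicalSpace L]
  [ConditionallyCompleteLattice L] {f : ι → X → L}

lemma continuous_ciSup_of_fintype [ContinuousSup L] (hf : ∀ i, Continuous (f i)) :
    Continuous fun x => ⨆ i, f i x := by
  rcases isEmpty_or_nonempty ι
  · simp only [iSup_of_empty']
    exact continuous_const
  · simp_rw [← Finset.sup'_univ_eq_ciSup]
    exact Continuous.finset_sup'_apply _ fun i _ => hf i

lemma continuous_ciInf_of_fintype [ContinuousInf L] (hf : ∀ i, Continuous (f i)) :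
    Continuous fun x => ⨅ i, f i x :=
  continuous_ciSup_of_fintype (X := X) (L := Lᵒᵈ) hf

end FiniteLattice

lemma norm_mul_sub_mul_le {R : Type*} [SeminormedRing R] {a b p q : R} (hp : ‖p‖ ≤ 1)
    (hq : ‖q‖ ≤ 1) : ‖a * b - p * q‖ ≤ (1 + ‖a - p‖) * (1 + ‖b - q‖) - 1 := by
  have hsplit : a * b - p * q = (a - p) * (b - q) + (a - p) * q + p * (b - q) := by noncomm_ring
  calc ‖a * b - p * q‖
      ≤ ‖a - p‖ * ‖b - q‖ + ‖a - p‖ * ‖q‖ + ‖p‖ * ‖b - q‖ := by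
        rw [hsplit]
        refine (norm_add₃_le).trans (add_le_add_three ?_ ?_ ?_) <;> exact norm_mul_le _ _
    _ ≤ ‖a - p‖ * ‖b - q‖ + ‖a - p‖ * 1 + 1 * ‖b - q‖ := by gcongr
    _ = (1 + ‖a - p‖) * (1 + ‖b - q‖) - 1 := by ring

lemma IsPrimitiveRoot.mul_of_coprime {M : Type*} [CommMonoid M] {ζ η : M} {m n : ℕ}
    (hζ : IsPrimitiveRoot ζ m) (hη : IsPrimitiveRoot η n) (hmn : m.Coprime n) :
    IsPrimitiveRoot (ζ * η) (m * n) := by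
  rw [IsPrimitiveRoot.iff_orderOf] at *
  rw [← hζ, ← hη] at hmn ⊢
  exact (Commute.all ζ η).orderOf_mul_eq_mul_orderOf_of_coprime hmn

lemma IsPrimitiveRoot.exists_fin_pow_succ_eq {R : Type*} [CommRing R] [IsDomain R] {k : ℕ}
    [NeZero k] {ζ ξ : R} (hζ : IsPrimitiveRoot ζ k) (hξ : ξ ^ k = 1) :
    ∃ a : Fin k, ζ ^ ((a : ℕ) + 1) = ξ := by
  have hk : k - 1 + 1 = k := Nat.sub_add_cancel (NeZero.one_le)
  have hζξ : (ξ * ζ ^ (k - 1)) ^ k = 1 := by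
    rw [mul_pow, hξ, ← pow_mul, mul_comm (k - 1), pow_mul, hζ.pow_eq_one, one_pow, one_mul]
  obtain ⟨i, hi, hpow⟩ := hζ.eq_pow_of_pow_eq_one hζξ
  refine ⟨⟨i, hi⟩, ?_⟩
  rw [pow_succ, hpow, mul_assoc, ← pow_succ, hk, hζ.pow_eq_one, mul_one]

lemma isPrimitiveRoot_zetad {d : ℕ} (hd : d ≠ 0) : IsPrimitiveRoot (zetad d) d :=
  Complex.isPrimitiveRoot_exp d hd

lemma norm_zetad (d : ℕ) : ‖zetad d‖ = 1 := by
  have h : 2 * (Real.pi : ℂ) * Complex.I / d = ((2 * Real.pi / d : ℝ) : ℂ) * Complex.I := by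
    push_cast; ring
  rw [zetad, h, Complex.norm_exp_ofReal_mul_I]

lemma norm_mul_zetad_pow (w : ℂ) (d k : ℕ) : ‖w * zetad d ^ k‖ = ‖w‖ := by
  rw [norm_mul, norm_pow, norm_zetad, one_pow, mul_one]

lemma exists_zetad_pow_succ_mul_eq {m n : ℕ} (hmn : m.Coprime n) (j : Fin (m * n)) :
    ∃ (a : Fin m) (b : Fin n),
      zetad m ^ ((a : ℕ) + 1) * zetad n ^ ((b : ℕ) + 1) = zetad (m * n) ^ ((j : ℕ) + 1) := by
  have hpos : 0 < m * n := j.pos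
  have : NeZero m := ⟨(Nat.pos_of_mul_pos_right hpos).ne'⟩
  have : NeZero n := ⟨(Nat.pos_of_mul_pos_left hpos).ne'⟩
  have : NeZero (m * n) := ⟨hpos.ne'⟩
  have hm := isPrimitiveRoot_zetad (NeZero.ne m)
  have hn := isPrimitiveRoot_zetad (NeZero.ne n)
  have hw : (zetad (m * n) ^ ((j : ℕ) + 1)) ^ (m * n) = 1 := by
    rw [pow_right_comm, (isPrimitiveRoot_zetad (NeZero.ne _)).pow_eq_one, one_pow]
  obtain ⟨i, -, hi⟩ := (hm.mul_of_coprime hn hmn).eq_pow_of_pow_eq_one hw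
  obtain ⟨a, ha⟩ := hm.exists_fin_pow_succ_eq (ξ := zetad m ^ i) (by
    rw [pow_right_comm, hm.pow_eq_one, one_pow])
  obtain ⟨b, hb⟩ := hn.exists_fin_pow_succ_eq (ξ := zetad n ^ i) (by
    rw [pow_right_comm, hn.pow_eq_one, one_pow])
  exact ⟨a, b, by rw [ha, hb, ← mul_pow, hi]⟩

noncomputable def discAt {d : ℕ} (ξ : Fin d → ℂ) (u : ℂ) : ℝ :=
  ⨆ j : Fin d, ⨅ i : Fin d, ‖ξ i - u * zetad d ^ ((j : ℕ) + 1)‖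

section Discrepancy

variable {d : ℕ} (ξ : Fin d → ℂ)

lemma discAt_nonneg (u : ℂ) : 0 ≤ discAt ξ u :=
  Real.iSup_nonneg fun _ => Real.iInf_nonneg fun _ => norm_nonneg _

lemma continuous_discAt : Continuous (discAt ξ) :=
  continuous_ciSup_of_fintype fun _ => continuous_ciInf_of_fintype fun _ => by fun_prop

lemma disc_eq_sInf_image : Disc ξ = sInf (discAt ξ '' sphere 0 1) := by
  rw [Disc]
  congr 1
  ext t
  simp [discAt, eq_comm]

lemma disc_le_discAt {u : ℂ} (hu : ‖u‖ = 1) : Disc ξ ≤ discAt ξ u := by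
  rw [disc_eq_sInf_image]
  exact csInf_le ⟨0, Set.forall_mem_image.2 fun v _ => discAt_nonneg ξ v⟩
    (Set.mem_image_of_mem _ (mem_sphere_zero_iff_norm.2 hu))

lemma exists_disc_eq_discAt : ∃ u : ℂ, ‖u‖ = 1 ∧ Disc ξ = discAt ξ u := by
  obtain ⟨u, hu, hmin⟩ := (isCompact_sphere (0 : ℂ) 1).exists_isMinOn
    (NormedSpace.sphere_nonempty.2 zero_le_one) (continuous_discAt ξ).continuousOn
  refine ⟨u, mem_sphere_zero_iff_norm.1 hu, ?_⟩
  rw [disc_eq_sInf_image]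
  exact IsLeast.csInf_eq ⟨Set.mem_image_of_mem _ hu, Set.forall_mem_image.2 hmin⟩

lemma exists_norm_sub_le_discAt (u : ℂ) (j : Fin d) :
    ∃ i, ‖ξ i - u * zetad d ^ ((j : ℕ) + 1)‖ ≤ discAt ξ u := by
  have : Nonempty (Fin d) := ⟨j⟩
  obtain ⟨i, hi⟩ := exists_eq_ciInf_of_finite (f := fun i => ‖ξ i - u * zetad d ^ ((j : ℕ) + 1)‖)
  exact ⟨i, hi ▸ le_ciSup (f := fun j : Fin d => ⨅ i, ‖ξ i - u * zetad d ^ ((j : ℕ) + 1)‖)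
    (Set.finite_range _).bddAbove j⟩

end Discrepancy

lemma discAt_mul_le {m n : ℕ} (hmn : m.Coprime n) (α : Fin m → ℂ) (β : Fin n → ℂ) {u v : ℂ}
    (hu : ‖u‖ = 1) (hv : ‖v‖ = 1) :
    discAt (fun i : Fin (m * n) =>
        α (finProdFinEquiv.symm i).1 * β (finProdFinEquiv.symm i).2) (u * v) ≤
      (1 + discAt α u) * (1 + discAt β v) - 1 := by
  have hα := discAt_nonneg α u
  have hβ := discAt_nonneg β v
  refine Real.iSup_le (fun j => ?_) (by nlinarith)
  obtain ⟨a, b, hab⟩ := exists_zetad_pow_succ_mul_eq hmn j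
  obtain ⟨x, hx⟩ := exists_norm_sub_le_discAt α u a
  obtain ⟨y, hy⟩ := exists_norm_sub_le_discAt β v b
  have hroot : u * v * zetad (m * n) ^ ((j : ℕ) + 1) =
      (u * zetad m ^ ((a : ℕ) + 1)) * (v * zetad n ^ ((b : ℕ) + 1)) := by
    rw [← hab]; ring
  calc _ ≤ ‖α x * β y - u * v * zetad (m * n) ^ ((j : ℕ) + 1)‖ := by
        refine (ciInf_le (Set.finite_range _).bddBelow (finProdFinEquiv (x, y))).trans_eq ?_
        simp
    _ ≤ (1 + ‖α x - u * zetad m ^ ((a : ℕ) + 1)‖) * (1 + ‖β y - v * zetad n ^ ((b : ℕ) + 1)‖)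
          - 1 := by
        rw [hroot]
        exact norm_mul_sub_mul_le ((norm_mul_zetad_pow u _ _).trans_le hu.le)
          ((norm_mul_zetad_pow v _ _).trans_le hv.le)
    _ ≤ (1 + discAt α u) * (1 + discAt β v) - 1 := by gcongr

theorem stmt7_general (m n : ℕ) (hcop : Nat.Coprime m n)
    (α : Fin m → ℂ) (β : Fin n → ℂ) :
    Disc (fun i : Fin (m * n) =>
        α (finProdFinEquiv.symm i).1 * β (finProdFinEquiv.symm i).2) ≤
      (1 + Disc α) * (1 + Disc β) - 1 := by
  obtain ⟨u, hu, hα⟩ := exists_disc_eq_discAt α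
  obtain ⟨v, hv, hβ⟩ := exists_disc_eq_discAt β
  rw [hα, hβ]
  exact (disc_le_discAt _ (by rw [norm_mul, hu, hv, one_mul])).trans (discAt_mul_le hcop α β hu hv)

/-- For coprime `m, n`, the `mn`-tuple of products `α_k β_ℓ` satisfies
`D((α_k β_ℓ)) ≤ (1 + D(α))(1 + D(β)) − 1`. -/
theorem stmt7 (m n : ℕ) (hm : 0 < m) (hn : 0 < n) (hcop : Nat.Coprime m n)
    (α : Fin m → ℂ) (β : Fin n → ℂ) :
    Disc (fun i : Fin (m * n) =>
        α (finProdFinEquiv.symm i).1 * β (finProdFinEquiv.symm i).2) ≤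
      (1 + Disc α) * (1 + Disc β) - 1 :=
  stmt7_general m n hcop α β
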